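/- Fix n ≥ 1, let (α i)_{i : Fin (n*n)} be an orthonormal basis of Mₙ(ℂ) for the Hilbert–Schmidt inner product, and let δ : Mₙ(ℂ) → M_{n·n}(ℂ) be the unique linear map with δ(α i) = (α i) ⊗ₖ (α i); assume δ is completely positive. If δ(1) is idempotent (δ(1)·δ(1) = δ(1)), then the set of basis elements is closed under matrix multiplication: for all i, j, the product (α i)·(α j) is either 0 or equal to α k for some k. -/

import Mathlib

open Matrix Kronecker ComplexOrder

noncomputable section

/-- The Hilbert-Schmidt inner product `⟨a, b⟩ = Tr(aᴴ b)` on square matrices. -/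
def hsInner {m : Type*} [Fintype m] (a b : Matrix m m ℂ) : ℂ :=
  (aᴴ * b).trace

/-- The amplification `id ⊗ Φ` of a linear map `Φ` between matrix algebras,
acting blockwise on matrices indexed by `Fin k × p`. -/
def amplify {p q : Type*} [Fintype p] [Fintype q]
    (Φ : Matrix p p ℂ →ₗ[ℂ] Matrix q q ℂ) (k : ℕ)
    (M : Matrix (Fin k × p) (Fin k × p) ℂ) :
    Matrix (Fin k × q) (Fin k × q) ℂ :=
  Matrix.of fun i j => Φ (Matrix.of fun a b => M (i.1, a) (j.1, b)) i.2 j.2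

/-- A linear map between matrix algebras is completely positive if all its
amplifications send positive semidefinite matrices to positive semidefinite matrices. -/
def IsCompletelyPositive {p q : Type*} [Fintype p] [Fintype q]
    (Φ : Matrix p p ℂ →ₗ[ℂ] Matrix q q ℂ) : Prop :=
  ∀ (k : ℕ) (M : Matrix (Fin k × p) (Fin k × p) ℂ),
    M.PosSemidef → (amplify Φ k M).PosSemidef

/-!
Complete positivity makes `δ` Hermitian-preserving, and since `δ 1` is then a projection, `δ`
satisfies the Kadison–Schwarz inequality `δ (aᴴ * a) ≥ (δ a)ᴴ * δ a`. For `a = (α i)ᴴ` the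
defects `δ (α i * (α i)ᴴ) - δ (α i) * (δ (α i))ᴴ` are positive semidefinite, and their traces add
up to `n·n - n·n = 0`, because `∑ i, α i * (α i)ᴴ = n • 1`, `tr (δ 1) = ‖1‖² = n` and
`tr (δ (α i) * (δ (α i))ᴴ) = 1`; so they vanish. By Choi's multiplicative-domain argument
`δ (α i * b) = δ (α i) * δ b`, hence `x = α i * α j` satisfies `δ x = x ⊗ₖ x`. Comparing
coefficients of `α k ⊗ₖ α l` on both sides shows that the coordinates `c k = ⟨α k, x⟩` satisfy
`c k * c l = if k = l then c k else 0`, so `c` is either `0` or a standard basis vector.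
-/

lemma Complex.eq_zero_of_forall_nonneg {z c : ℂ} (hc : 0 ≤ c)
    (h : ∀ s : ℂ, 0 ≤ s * z + star (s * z) + star s * s * c) : z = 0 := by
  by_contra hz
  have hN : 0 < Complex.normSq z := Complex.normSq_pos.2 hz
  have hc_re : 0 ≤ c.re := (Complex.le_def.1 hc).1
  have hc_im : c.im = 0 := (Complex.le_def.1 hc).2.symm
  set t : ℝ := 1 / (c.re + 1)
  have ht : 0 < t := by positivity
  have htc : t * c.re < 1 := by
    rw [div_mul_eq_mul_div, one_mul, div_lt_one (by linarith)]
    linarith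
  have h_re := (Complex.le_def.1 (h (-t * star z))).1
  simp only [Complex.normSq_apply] at hN
  simp [Complex.mul_re, Complex.mul_im, hc_im] at h_re
  nlinarith [mul_pos ht hN]

namespace Matrix

variable {q : Type*} [Fintype q]

lemma star_dotProduct_conjTranspose_mulVec (A : Matrix q q ℂ) (v w : q → ℂ) :
    star w ⬝ᵥ (Aᴴ *ᵥ v) = star (star v ⬝ᵥ (A *ᵥ w)) := by
  rw [star_dotProduct, star_mulVec, conjTranspose_conjTranspose, ← dotProduct_mulVec]

lemma star_mulVec_dotProduct_mulVec (A B : Matrix q q ℂ) (v w : q → ℂ) :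
    star (A *ᵥ v) ⬝ᵥ (B *ᵥ w) = star v ⬝ᵥ ((Aᴴ * B) *ᵥ w) := by
  rw [star_mulVec, dotProduct_mulVec, vecMul_vecMul, ← dotProduct_mulVec]

lemma eq_zero_of_forall_star_dotProduct_mulVec {M : Matrix q q ℂ}
    (h : ∀ v w, star v ⬝ᵥ (M *ᵥ w) = 0) : M = 0 :=
  ext_iff_mulVec.2 fun w => by
    rw [zero_mulVec]
    refine dotProduct_eq_zero _ fun u => ?_
    rw [dotProduct_comm]
    simpa using h (star u) w

lemma star_dotProduct_mulVec_eq_zero_of_block_nonneg {A B C : Matrix q q ℂ}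
    (h : ∀ v w : q → ℂ, 0 ≤ star v ⬝ᵥ (A *ᵥ v) + star v ⬝ᵥ (B *ᵥ w)
      + star w ⬝ᵥ (Bᴴ *ᵥ v) + star w ⬝ᵥ (C *ᵥ w))
    {v : q → ℂ} (hv : star v ⬝ᵥ (A *ᵥ v) = 0) (w : q → ℂ) : star v ⬝ᵥ (B *ᵥ w) = 0 := by
  refine Complex.eq_zero_of_forall_nonneg (c := star w ⬝ᵥ (C *ᵥ w)) (by simpa using h 0 w)
    fun s => ?_
  have hs := h v (s • w)
  simp only [hv, star_dotProduct_conjTranspose_mulVec, mulVec_smul, dotProduct_smul, star_smul,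
    smul_dotProduct, smul_eq_mul, zero_add] at hs
  convert hs using 1
  simp only [star_mul']
  ring

end Matrix

section CompletelyPositive

variable {p q : Type*} [Fintype p] [Fintype q] {Φ : Matrix p p ℂ →ₗ[ℂ] Matrix q q ℂ}

lemma Matrix.posSemidef_blockGram {k : ℕ} (x : Fin k → Matrix p p ℂ) :
    (of fun i j : Fin k × p => ((x i.1)ᴴ * x j.1) i.2 j.2).PosSemidef := by
  have h : (of fun i j : Fin k × p => ((x i.1)ᴴ * x j.1) i.2 j.2) =
      (of fun r (j : Fin k × p) => x j.1 r j.2)ᴴ * of fun r (j : Fin k × p) => x j.1 r j.2 := by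
    ext i j
    simp [mul_apply]
  rw [h]
  exact posSemidef_conjTranspose_mul_self _

lemma IsCompletelyPositive.sum_star_dotProduct_nonneg (hΦ : IsCompletelyPositive Φ) {k : ℕ}
    (x : Fin k → Matrix p p ℂ) (ξ : Fin k → q → ℂ) :
    0 ≤ ∑ i, ∑ j, star (ξ i) ⬝ᵥ (Φ ((x i)ᴴ * x j) *ᵥ ξ j) := by
  convert (hΦ k _ (posSemidef_blockGram x)).dotProduct_mulVec_nonneg (fun i => ξ i.1 i.2)
    using 1
  simp only [amplify, dotProduct, mulVec, of_apply, Pi.star_apply, Fintype.sum_prod_type,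
    Finset.mul_sum]
  exact Finset.sum_congr rfl fun i _ => Finset.sum_comm

lemma IsCompletelyPositive.map_conjTranspose [DecidableEq p] (hΦ : IsCompletelyPositive Φ)
    (a : Matrix p p ℂ) : Φ aᴴ = (Φ a)ᴴ := by
  have h := (hΦ 2 _ (posSemidef_blockGram ![1, a])).isHermitian
  ext r s
  have h10 := h.apply (1, r) (0, s)
  simp only [amplify, of_apply, cons_val_zero, cons_val_one, conjTranspose_one, one_mul,
    mul_one] at h10
  exact h10.symm

lemma IsCompletelyPositive.map_one_mul [DecidableEq p] [DecidableEq q]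
    (hΦ : IsCompletelyPositive Φ) (hid : Φ 1 * Φ 1 = Φ 1) (x : Matrix p p ℂ) :
    Φ 1 * Φ x = Φ x := by
  have hP1 : (Φ 1)ᴴ = Φ 1 := by rw [← hΦ.map_conjTranspose, conjTranspose_one]
  have hblock : ∀ v w, 0 ≤ star v ⬝ᵥ (Φ 1 *ᵥ v) + star v ⬝ᵥ (Φ x *ᵥ w)
      + star w ⬝ᵥ ((Φ x)ᴴ *ᵥ v) + star w ⬝ᵥ (Φ (xᴴ * x) *ᵥ w) := fun v w => by
    simpa [Fin.sum_univ_two, hΦ.map_conjTranspose, hP1, add_assoc] using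
      hΦ.sum_star_dotProduct_nonneg ![1, x] ![v, w]
  have hP : (1 - Φ 1)ᴴ = 1 - Φ 1 := by rw [conjTranspose_sub, conjTranspose_one, hP1]
  have hkill : ∀ u, star ((1 - Φ 1) *ᵥ u) ⬝ᵥ (Φ 1 *ᵥ ((1 - Φ 1) *ᵥ u)) = 0 := fun u => by
    rw [mulVec_mulVec, star_mulVec_dotProduct_mulVec, hP, mul_sub, mul_one, hid, sub_self,
      mul_zero, zero_mulVec, dotProduct_zero]
  suffices h : (1 - Φ 1) * Φ x = 0 by rwa [sub_mul, one_mul, sub_eq_zero, eq_comm] at h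
  refine eq_zero_of_forall_star_dotProduct_mulVec fun u w => ?_
  rw [← hP, ← star_mulVec_dotProduct_mulVec]
  exact star_dotProduct_mulVec_eq_zero_of_block_nonneg hblock (hkill u) w

def schwarzDefect (Φ : Matrix p p ℂ →ₗ[ℂ] Matrix q q ℂ) (a b : Matrix p p ℂ) : Matrix q q ℂ :=
  Φ (aᴴ * b) - (Φ a)ᴴ * Φ b

lemma IsCompletelyPositive.conjTranspose_schwarzDefect [DecidableEq p]
    (hΦ : IsCompletelyPositive Φ) (a b : Matrix p p ℂ) :
    (schwarzDefect Φ a b)ᴴ = schwarzDefect Φ b a := by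
  simp only [schwarzDefect, conjTranspose_sub, conjTranspose_mul, conjTranspose_conjTranspose,
    ← hΦ.map_conjTranspose]

lemma IsCompletelyPositive.schwarzDefect_block_nonneg [DecidableEq p] [DecidableEq q]
    (hΦ : IsCompletelyPositive Φ) (hid : Φ 1 * Φ 1 = Φ 1) (a b : Matrix p p ℂ) (v w : q → ℂ) :
    0 ≤ star v ⬝ᵥ (schwarzDefect Φ a a *ᵥ v) + star v ⬝ᵥ (schwarzDefect Φ a b *ᵥ w)
      + star w ⬝ᵥ ((schwarzDefect Φ a b)ᴴ *ᵥ v) + star w ⬝ᵥ (schwarzDefect Φ b b *ᵥ w) := by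
  have hP1 : (Φ 1)ᴴ = Φ 1 := by rw [← hΦ.map_conjTranspose, conjTranspose_one]
  -- positivity of the block matrix `[Φ (xᵢᴴ xⱼ)]` for `x = (1, a, b)`, tested on a vector
  -- whose first component `-(Φ a v + Φ b w)` completes the square
  have h := hΦ.sum_star_dotProduct_nonneg ![1, a, b] ![-(Φ a *ᵥ v + Φ b *ᵥ w), v, w]
  simp only [Fin.sum_univ_three, cons_val_zero, cons_val_one, cons_val_two, head_cons, tail_cons,
    conjTranspose_one, one_mul, mul_one, hΦ.map_conjTranspose, hP1, star_neg, neg_dotProduct,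
    dotProduct_neg, mulVec_neg, mulVec_add, star_add, add_dotProduct, dotProduct_add,
    mulVec_mulVec, hΦ.map_one_mul hid, star_mulVec_dotProduct_mulVec] at h
  rw [hΦ.conjTranspose_schwarzDefect]
  simp only [schwarzDefect, sub_mulVec, dotProduct_sub]
  convert h using 1
  ring

lemma IsCompletelyPositive.schwarzDefect_posSemidef [DecidableEq p] [DecidableEq q]
    (hΦ : IsCompletelyPositive Φ) (hid : Φ 1 * Φ 1 = Φ 1) (a : Matrix p p ℂ) :
    (schwarzDefect Φ a a).PosSemidef :=
  .of_dotProduct_mulVec_nonneg (hΦ.conjTranspose_schwarzDefect a a) fun v => by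
    simpa using hΦ.schwarzDefect_block_nonneg hid a 0 v 0

lemma IsCompletelyPositive.schwarzDefect_eq_zero [DecidableEq p] [DecidableEq q]
    (hΦ : IsCompletelyPositive Φ) (hid : Φ 1 * Φ 1 = Φ 1) {a : Matrix p p ℂ}
    (ha : schwarzDefect Φ a a = 0) (b : Matrix p p ℂ) : schwarzDefect Φ a b = 0 :=
  eq_zero_of_forall_star_dotProduct_mulVec fun v w =>
    star_dotProduct_mulVec_eq_zero_of_block_nonneg (hΦ.schwarzDefect_block_nonneg hid a b)
      (by simp [ha]) w

end CompletelyPositive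

section HilbertSchmidt

variable {m n ι : Type*} [Fintype m] [Fintype n]

def HSOrthonormal [DecidableEq ι] (α : ι → Matrix m m ℂ) : Prop :=
  ∀ i j, hsInner (α i) (α j) = if i = j then 1 else 0

lemma hsInner_single [DecidableEq m] (a : Matrix m m ℂ) (r s : m) (c : ℂ) :
    hsInner a (single r s c) = star (a r s) * c := by
  simp [hsInner, trace, mul_apply, single_apply, ite_and]

lemma hsInner_kronecker (a c : Matrix m m ℂ) (b d : Matrix n n ℂ) :
    hsInner (a ⊗ₖ b) (c ⊗ₖ d) = hsInner a c * hsInner b d := by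
  rw [hsInner, conjTranspose_kronecker, ← mul_kronecker_mul, trace_kronecker, hsInner, hsInner]

lemma HSOrthonormal.kronecker_self [DecidableEq ι] {α : ι → Matrix m m ℂ}
    (hα : HSOrthonormal α) : HSOrthonormal fun i => α i ⊗ₖ α i := by
  intro i j
  rw [hsInner_kronecker, hα]
  split_ifs <;> simp

variable [Fintype ι]

lemma hsInner_sum_smul_right (a : Matrix m m ℂ) (c : ι → ℂ) (b : ι → Matrix m m ℂ) :
    hsInner a (∑ i, c i • b i) = ∑ i, c i * hsInner a (b i) := by
  simp only [hsInner, Matrix.mul_sum, Matrix.mul_smul, trace_sum, trace_smul, smul_eq_mul]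

lemma hsInner_sum_smul_left (c : ι → ℂ) (b : ι → Matrix m m ℂ) (a : Matrix m m ℂ) :
    hsInner (∑ i, c i • b i) a = ∑ i, star (c i) * hsInner (b i) a := by
  simp only [hsInner, conjTranspose_sum, conjTranspose_smul, Matrix.sum_mul, Matrix.smul_mul,
    trace_sum, trace_smul, smul_eq_mul]

namespace HSOrthonormal

variable [DecidableEq ι] {α : ι → Matrix m m ℂ}

lemma hsInner_sum_smul (hα : HSOrthonormal α) (k : ι) (c : ι → ℂ) :
    hsInner (α k) (∑ i, c i • α i) = c k := by
  simp [hsInner_sum_smul_right, hα k]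

lemma hsInner_sum_smul_sum_smul (hα : HSOrthonormal α) (c d : ι → ℂ) :
    hsInner (∑ i, c i • α i) (∑ i, d i • α i) = ∑ i, star (c i) * d i := by
  simp only [hsInner_sum_smul_left, hα.hsInner_sum_smul]

lemma sum_hsInner_smul (hα : HSOrthonormal α) (hspan : Submodule.span ℂ (Set.range α) = ⊤)
    (x : Matrix m m ℂ) : ∑ i, hsInner (α i) x • α i = x := by
  have key : ∑ i, ((traceLinearMap m ℂ ℂ) ∘ₗ LinearMap.mulLeft ℂ (α i)ᴴ).smulRight (α i) =
      LinearMap.id := by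
    refine LinearMap.ext_on hspan ?_
    rintro _ ⟨j, rfl⟩
    have hj := (hα · j)
    simp only [hsInner] at hj
    simp [hj]
  simpa [hsInner] using LinearMap.congr_fun key x

lemma sum_mul_conjTranspose [DecidableEq m] (hα : HSOrthonormal α)
    (hspan : Submodule.span ℂ (Set.range α) = ⊤) :
    ∑ i, α i * (α i)ᴴ = (Fintype.card m : ℂ) • 1 := by
  have hsingle : ∀ r s, ∑ i, star (α i r s) • α i = single r s 1 := fun r s => by
    simpa [hsInner_single] using hα.sum_hsInner_smul hspan (single r s 1)
  ext p r
  calc (∑ i, α i * (α i)ᴴ) p r = ∑ s, (∑ i, star (α i r s) • α i) p s := by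
        simp only [Matrix.sum_apply, mul_apply, conjTranspose_apply, Matrix.smul_apply,
          smul_eq_mul]
        rw [Finset.sum_comm]
        simp only [mul_comm]
    _ = ((Fintype.card m : ℂ) • (1 : Matrix m m ℂ)) p r := by
        simp only [hsingle]
        simp [single_apply, one_apply, eq_comm]

lemma card_eq [DecidableEq m] (hα : HSOrthonormal α)
    (hspan : Submodule.span ℂ (Set.range α) = ⊤) :
    (Fintype.card ι : ℂ) = Fintype.card m * Fintype.card m := by
  have hunit : ∀ i, (α i * (α i)ᴴ).trace = 1 := fun i => by
    rw [trace_mul_comm]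
    simpa [hsInner] using hα i i
  simpa [trace_sum, hunit] using congrArg trace (hα.sum_mul_conjTranspose hspan)

end HSOrthonormal

end HilbertSchmidt

lemma eq_zero_or_exists_eq_single {ι R : Type*} [DecidableEq ι] [MonoidWithZero R]
    [IsCancelMulZero R] {c : ι → R} (hc : ∀ k l, c k * c l = if k = l then c k else 0) :
    c = 0 ∨ ∃ k, c = Pi.single k 1 := by
  by_cases h : c = 0
  · exact .inl h
  obtain ⟨k, hk⟩ := Function.ne_iff.1 h
  have hk1 : c k = 1 := mul_left_cancel₀ hk (by simpa using hc k k)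
  refine .inr ⟨k, funext fun l => ?_⟩
  rcases eq_or_ne l k with rfl | hlk
  · simpa using hk1
  · simpa [hlk] using (mul_eq_zero.1 ((hc k l).trans (if_neg hlk.symm))).resolve_left hk

section KroneckerDiagonal

variable {m ι : Type*} [Fintype m] [Fintype ι] [DecidableEq ι]
  {α : ι → Matrix m m ℂ} {Φ : Matrix m m ℂ →ₗ[ℂ] Matrix (m × m) (m × m) ℂ}

lemma HSOrthonormal.map_eq_sum_kronecker_self (hα : HSOrthonormal α)
    (hspan : Submodule.span ℂ (Set.range α) = ⊤) (hΦα : ∀ i, Φ (α i) = α i ⊗ₖ α i)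
    (x : Matrix m m ℂ) : Φ x = ∑ k, hsInner (α k) x • (α k ⊗ₖ α k) := by
  conv_lhs => rw [← hα.sum_hsInner_smul hspan x]
  simp [map_sum, hΦα]

lemma HSOrthonormal.trace_map_one [DecidableEq m] (hα : HSOrthonormal α)
    (hspan : Submodule.span ℂ (Set.range α) = ⊤) (hΦα : ∀ i, Φ (α i) = α i ⊗ₖ α i)
    (hΦ : IsCompletelyPositive Φ) (hid : Φ 1 * Φ 1 = Φ 1) :
    (Φ 1).trace = Fintype.card m := by
  have hP : (Φ 1)ᴴ = Φ 1 := by rw [← hΦ.map_conjTranspose, conjTranspose_one]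
  calc (Φ 1).trace = hsInner (Φ 1) (Φ 1) := by rw [hsInner, hP, hid]
    _ = hsInner (1 : Matrix m m ℂ) 1 := by
      rw [hα.map_eq_sum_kronecker_self hspan hΦα, hα.kronecker_self.hsInner_sum_smul_sum_smul,
        ← hα.hsInner_sum_smul_sum_smul, hα.sum_hsInner_smul hspan]
    _ = Fintype.card m := by simp [hsInner]

lemma IsCompletelyPositive.schwarzDefect_conjTranspose_eq_zero [DecidableEq m]
    (hΦ : IsCompletelyPositive Φ) (hid : Φ 1 * Φ 1 = Φ 1) (hα : HSOrthonormal α)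
    (hspan : Submodule.span ℂ (Set.range α) = ⊤) (hΦα : ∀ i, Φ (α i) = α i ⊗ₖ α i) (i : ι) :
    schwarzDefect Φ (α i)ᴴ (α i)ᴴ = 0 := by
  have hD : ∀ i, schwarzDefect Φ (α i)ᴴ (α i)ᴴ = Φ (α i * (α i)ᴴ) - Φ (α i) * (Φ (α i))ᴴ :=
    fun i => by
      rw [schwarzDefect, conjTranspose_conjTranspose, hΦ.map_conjTranspose,
        conjTranspose_conjTranspose]
  have hunit : ∀ i, (Φ (α i) * (Φ (α i))ᴴ).trace = 1 := fun i => by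
    rw [trace_mul_comm, ← hsInner, hΦα]
    simpa using hα.kronecker_self i i
  have hsum : ∑ i, (schwarzDefect Φ (α i)ᴴ (α i)ᴴ).trace = 0 := by
    simp only [hD, trace_sub, Finset.sum_sub_distrib, hunit, ← trace_sum, ← map_sum,
      hα.sum_mul_conjTranspose hspan, map_smul, trace_smul, hα.trace_map_one hspan hΦα hΦ hid]
    simp [hα.card_eq hspan]
  have hPSD := fun i => hΦ.schwarzDefect_posSemidef hid (α i)ᴴ
  rw [← (hPSD i).trace_eq_zero_iff]
  exact (Finset.sum_eq_zero_iff_of_nonneg fun j _ => (hPSD j).trace_nonneg).1 hsum i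
    (Finset.mem_univ i)

lemma IsCompletelyPositive.map_basis_mul [DecidableEq m] (hΦ : IsCompletelyPositive Φ)
    (hid : Φ 1 * Φ 1 = Φ 1) (hα : HSOrthonormal α)
    (hspan : Submodule.span ℂ (Set.range α) = ⊤) (hΦα : ∀ i, Φ (α i) = α i ⊗ₖ α i) (i : ι)
    (b : Matrix m m ℂ) : Φ (α i * b) = Φ (α i) * Φ b := by
  have h := hΦ.schwarzDefect_eq_zero hid
    (hΦ.schwarzDefect_conjTranspose_eq_zero hid hα hspan hΦα i) b
  rwa [schwarzDefect, conjTranspose_conjTranspose, hΦ.map_conjTranspose,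
    conjTranspose_conjTranspose, sub_eq_zero] at h

lemma HSOrthonormal.eq_zero_or_exists_eq_of_map_eq_kronecker_self (hα : HSOrthonormal α)
    (hspan : Submodule.span ℂ (Set.range α) = ⊤) (hΦα : ∀ i, Φ (α i) = α i ⊗ₖ α i)
    {x : Matrix m m ℂ} (hx : Φ x = x ⊗ₖ x) : x = 0 ∨ ∃ k, x = α k := by
  set c := fun k => hsInner (α k) x
  have hc : ∀ k l, c k * c l = if k = l then c k else 0 := fun k l => by
    calc c k * c l = hsInner (α k ⊗ₖ α l) (Φ x) := by rw [hx, hsInner_kronecker]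
      _ = ∑ a, hsInner (α a) x * (hsInner (α k) (α a) * hsInner (α l) (α a)) := by
        rw [hα.map_eq_sum_kronecker_self hspan hΦα, hsInner_sum_smul_right]
        simp only [hsInner_kronecker]
      _ = if k = l then c k else 0 := by
        simp only [hα _ _]
        split_ifs with hkl <;> simp [hkl, c]
  have hx_eq : ∑ k, c k • α k = x := hα.sum_hsInner_smul hspan x
  rcases eq_zero_or_exists_eq_single hc with h0 | ⟨k, hk⟩
  · rw [h0] at hx_eq
    exact .inl (by simpa using hx_eq.symm)
  · rw [hk] at hx_eq
    exact .inr ⟨k, by simpa [Pi.single_apply] using hx_eq.symm⟩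

end KroneckerDiagonal

theorem stmt_16_general (n : ℕ)
    (α : Fin (n * n) → Matrix (Fin n) (Fin n) ℂ)
    (horth : ∀ i j, hsInner (α i) (α j) = if i = j then 1 else 0)
    (hspan : Submodule.span ℂ (Set.range α) = ⊤)
    (δ : Matrix (Fin n) (Fin n) ℂ →ₗ[ℂ] Matrix (Fin n × Fin n) (Fin n × Fin n) ℂ)
    (hδ : ∀ i, δ (α i) = α i ⊗ₖ α i)
    (hCP : IsCompletelyPositive δ)
    (hid : δ 1 * δ 1 = δ 1) :
    ∀ i j, α i * α j = 0 ∨ ∃ k, α i * α j = α k := by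
  intro i j
  refine HSOrthonormal.eq_zero_or_exists_eq_of_map_eq_kronecker_self horth hspan hδ ?_
  rw [hCP.map_basis_mul hid horth hspan hδ, hδ, hδ, ← mul_kronecker_mul]

/-- If δ is completely positive and δ(1) is idempotent, then the basis elements
are closed under matrix multiplication. -/
theorem stmt_16 (n : ℕ) (hn : 1 ≤ n)
    (α : Fin (n * n) → Matrix (Fin n) (Fin n) ℂ)
    (horth : ∀ i j, hsInner (α i) (α j) = if i = j then 1 else 0)
    (hspan : Submodule.span ℂ (Set.range α) = ⊤)
    (δ : Matrix (Fin n) (Fin n) ℂ →ₗ[ℂ] Matrix (Fin n × Fin n) (Fin n × Fin n) ℂ)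
    (hδ : ∀ i, δ (α i) = α i ⊗ₖ α i)
    (hCP : IsCompletelyPositive δ)
    (hid : δ 1 * δ 1 = δ 1) :
    ∀ i j, α i * α j = 0 ∨ ∃ k, α i * α j = α k :=
  stmt_16_general n α horth hspan δ hδ hCP hid
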